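/- In the chance-constrained setting, suppose argmin φ ≠ ∅, g₀ : ℝⁿ → [-∞,∞] is proper lsc, and each H_i : ℝⁿ ⇉ Ξ is outer semicontinuous. For μ, μ^ν Borel probability measures on Ξ, suppose d_mi(μ^ν,μ) = sup_{x ∈ dom g₀} max_{i} |μ^ν(H_i(x)) − μ(H_i(x))| → 0 and λ^ν ∈ (0,∞) → 0 with (1/λ^ν) d_mi(μ^ν,μ)^α → 0. If the sequence {(u^ν,x^ν)} is bounded and satisfies (u^ν,x^ν) ∈ ε^ν-argmin f^ν with ε^ν → 0, then: (a) f^ν(u^ν,x^ν) → inf φ; (b) LimOut(ε^ν-argmin f^ν) ⊆ {0} × argmin φ; in particular every cluster point of {x^ν} lies in argmin φ. -/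

import Mathlib

open MeasureTheory Filter Topology Metric Set Pointwise

noncomputable section

/-- Euclidean (ℓ²) norm on `Fin m → ℝ`. -/
def en2 {m : ℕ} (u : Fin m → ℝ) : ℝ := Real.sqrt (∑ i, u i ^ 2)

/-- ε-argmin of an extended-real-valued function. -/
def eArgmin {γ : Type*} (ψ : γ → EReal) (ε : ℝ) : Set γ :=
  {z | ψ z ≠ ⊤ ∧ ψ z ≤ (⨅ w, ψ w) + (ε : EReal)}

/-- Outer limit of a sequence of sets: limits of subsequences of points from the sets. -/
def LimOut {γ : Type*} [TopologicalSpace γ] (C : ℕ → Set γ) : Set γ :=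
  {z | ∃ N : ℕ → ℕ, StrictMono N ∧ ∃ zs : ℕ → γ, (∀ k, zs k ∈ C (N k)) ∧
    Tendsto zs atTop (𝓝 z)}

/-- Minimal information metric in the chance-constrained setting. -/
def dmiH {d n m : ℕ} (g0 : EuclideanSpace ℝ (Fin n) → EReal)
    (H : Fin m → EuclideanSpace ℝ (Fin n) → Set (EuclideanSpace ℝ (Fin d)))
    (μ1 μ2 : Measure (EuclideanSpace ℝ (Fin d))) : ℝ :=
  sSup { r | ∃ x, g0 x ≠ ⊤ ∧ ∃ i : Fin m,
      r = |(μ1 (H i x)).toReal - (μ2 (H i x)).toReal| }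

/-- Chance-constrained objective φ. -/
def phiCC {d n m : ℕ} (g0 : EuclideanSpace ℝ (Fin n) → EReal) (b : Fin m → ℝ)
    (H : Fin m → EuclideanSpace ℝ (Fin n) → Set (EuclideanSpace ℝ (Fin d)))
    (μ : Measure (EuclideanSpace ℝ (Fin d))) : EuclideanSpace ℝ (Fin n) → EReal :=
  fun x => g0 x + ∑ i, (if b i - (μ (H i x)).toReal ≤ 0 then (0 : EReal) else ⊤)

/-- Chance-constrained approximating Rockafellian. -/
def rockCC {d n m : ℕ} (g0 : EuclideanSpace ℝ (Fin n) → EReal) (b : Fin m → ℝ)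
    (H : Fin m → EuclideanSpace ℝ (Fin n) → Set (EuclideanSpace ℝ (Fin d)))
    (μ' : Measure (EuclideanSpace ℝ (Fin d))) (α lam : ℝ) :
    (Fin m → ℝ) × EuclideanSpace ℝ (Fin n) → EReal :=
  fun p => g0 p.2 +
    (∑ i, (if p.1 i + b i - (μ' (H i p.2)).toReal ≤ 0 then (0 : EReal) else ⊤)) +
    (((1 / (α * lam)) * en2 p.1 ^ α : ℝ) : EReal)




lemma ind_sum_zero {m : ℕ} {c : Fin m → Prop} [DecidablePred c] (h : ∀ i, c i) :
    ∑ i, (if c i then (0:EReal) else ⊤) = 0 :=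
  Finset.sum_eq_zero fun i _ => if_pos (h i)

lemma ind_sum_top {m : ℕ} {c : Fin m → Prop} [DecidablePred c] {j : Fin m} (hj : ¬ c j) :
    ∑ i, (if c i then (0:EReal) else ⊤) = ⊤ := by
  refine le_antisymm le_top ?_
  have h0 : ∀ i ∈ Finset.univ, (0:EReal) ≤ (fun i => if c i then (0:EReal) else ⊤) i := by
    intro i _; by_cases h : c i <;> simp [h]
  have := Finset.single_le_sum h0 (Finset.mem_univ j)
  simpa [hj] using this

lemma ind_sum_cases {m : ℕ} (c : Fin m → Prop) [DecidablePred c] :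
    (∀ i, c i) ∨ ∑ i, (if c i then (0:EReal) else ⊤) = ⊤ := by
  by_cases h : ∀ i, c i
  · exact Or.inl h
  · push_neg at h
    obtain ⟨j, hj⟩ := h
    exact Or.inr (ind_sum_top hj)

/-- Decompose a finite Rockafellian/phi value. -/
lemma finite_decomp {a : EReal} (hab : a ≠ ⊥) {m : ℕ} {c : Fin m → Prop} [DecidablePred c]
    {r : ℝ} (h : a + (∑ i, (if c i then (0:EReal) else ⊤)) + (r : EReal) ≠ ⊤) :
    a ≠ ⊤ ∧ (∀ i, c i) ∧ a + (∑ i, (if c i then (0:EReal) else ⊤)) + (r : EReal)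
      = ((a.toReal + r : ℝ) : EReal) := by
  rcases ind_sum_cases c with hc | hc
  · rw [ind_sum_zero hc] at h ⊢
    rw [add_zero] at h ⊢
    have ha : a ≠ ⊤ := by
      intro hA; rw [hA] at h; exact h (EReal.top_add_of_ne_bot (by simp))
    refine ⟨ha, hc, ?_⟩
    rw [EReal.coe_add, EReal.coe_toReal ha hab]
  · exfalso
    rw [hc, EReal.add_top_of_ne_bot hab, EReal.top_add_of_ne_bot (by simp)] at h
    exact h rfl

lemma exists_coe_lt {a : EReal} (ha : a ≠ ⊥) : ∃ β : ℝ, (β : EReal) < a := by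
  by_cases h : a = ⊤
  · exact ⟨0, h ▸ (by simp)⟩
  · refine ⟨a.toReal - 1, ?_⟩
    rw [← EReal.coe_toReal h ha]
    exact_mod_cast sub_one_lt _

/-- Outer limit contains the intersection of closures of tails (one direction). -/
lemma mem_LimOut_of_mem_iInter_closure {γ : Type*} [MetricSpace γ] {C : ℕ → Set γ} {z : γ}
    (hz : z ∈ ⋂ N : ℕ, closure (⋃ ν, ⋃ (_ : N ≤ ν), C ν)) :
    ∃ N : ℕ → ℕ, StrictMono N ∧ ∃ zs : ℕ → γ, (∀ k, zs k ∈ C (N k)) ∧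
      Tendsto zs atTop (𝓝 z) := by
  have key : ∀ j : ℕ, ∃ ν : ℕ, j ≤ ν ∧ ∃ w ∈ C ν, dist z w < 1/(j+1) := by
    intro j
    have hzj : z ∈ closure (⋃ ν, ⋃ (_ : j ≤ ν), C ν) := mem_iInter.1 hz j
    rw [Metric.mem_closure_iff] at hzj
    obtain ⟨w, hw, hd⟩ := hzj (1/(j+1)) (by positivity)
    simp only [mem_iUnion] at hw
    obtain ⟨ν, hν, hwC⟩ := hw
    exact ⟨ν, hν, w, hwC, hd⟩
  choose ν hν w hw hd using key
  -- build strictly monotone σ with ν ∘ σ strictly monotone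
  let σ : ℕ → ℕ := fun k => Nat.rec 0 (fun _ prev => ν prev + 1) k
  have hσ0 : σ 0 = 0 := rfl
  have hσs : ∀ k, σ (k+1) = ν (σ k) + 1 := fun k => rfl
  have hσmono : StrictMono σ := strictMono_nat_of_lt_succ (fun k => by
    rw [hσs]; exact Nat.lt_succ_of_le (hν (σ k)))
  have hνσ : StrictMono (ν ∘ σ) := strictMono_nat_of_lt_succ (fun k => by
    have h1 : σ (k+1) ≤ ν (σ (k+1)) := hν _
    have : ν (σ k) < σ (k+1) := by rw [hσs]; exact Nat.lt_succ_self _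
    exact lt_of_lt_of_le this h1)
  refine ⟨ν ∘ σ, hνσ, w ∘ σ, fun k => hw (σ k), ?_⟩
  rw [tendsto_iff_dist_tendsto_zero]
  have hb : ∀ k, dist (w (σ k)) z ≤ 1/(k+1) := by
    intro k
    rw [dist_comm]
    refine le_trans (hd (σ k)).le ?_
    have h2 : (k:ℝ) ≤ (Nat.cast (σ k) : ℝ) := by exact_mod_cast hσmono.le_apply
    exact one_div_le_one_div_of_le (by positivity) (by linarith)
  refine squeeze_zero (fun k => dist_nonneg) hb ?_
  exact tendsto_one_div_add_atTop_nhds_zero_nat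

/-- Measure upper semicontinuity along outer limits. -/
lemma measure_tail_bound {γ : Type*} [MetricSpace γ] [MeasurableSpace γ] [BorelSpace γ]
    (μ : Measure γ) [IsFiniteMeasure μ] {C : ℕ → Set γ} {S : Set γ}
    (hS : ∀ z, (∃ N : ℕ → ℕ, StrictMono N ∧ ∃ zs : ℕ → γ, (∀ k, zs k ∈ C (N k)) ∧
      Tendsto zs atTop (𝓝 z)) → z ∈ S)
    {δ : ℝ} (hδ : 0 < δ) :
    ∀ᶠ k in atTop, (μ (C k)).toReal ≤ (μ S).toReal + δ := by
  set D : ℕ → Set γ := fun N => closure (⋃ ν, ⋃ (_ : N ≤ ν), C ν) with hD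
  have hDm : ∀ N, NullMeasurableSet (D N) μ :=
    fun N => (isClosed_closure.measurableSet).nullMeasurableSet
  have hDanti : Antitone D := by
    intro a b hab
    exact closure_mono (iUnion₂_mono' fun ν hν => ⟨ν, le_trans hab hν, subset_rfl⟩)
  have hsub : (⋂ N, D N) ⊆ S := fun z hz => hS z (mem_LimOut_of_mem_iInter_closure hz)
  have htend := MeasureTheory.tendsto_measure_iInter_atTop hDm hDanti ⟨0, measure_ne_top μ _⟩
  have hlt : μ (⋂ N, D N) < μ (⋂ N, D N) + ENNReal.ofReal δ :=
    ENNReal.lt_add_right (measure_ne_top μ _) (ENNReal.ofReal_pos.2 hδ).ne'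
  have hev : ∀ᶠ N in atTop, μ (D N) < μ (⋂ N, D N) + ENNReal.ofReal δ :=
    htend.eventually_lt_const hlt
  obtain ⟨N0, hN0⟩ := hev.exists
  filter_upwards [eventually_ge_atTop N0] with k hk
  have h1 : μ (C k) ≤ μ (D N0) :=
    measure_mono (le_trans (subset_iUnion₂ (s := fun ν _ => C ν) k hk) subset_closure)
  have h2 : μ (C k) ≤ μ S + ENNReal.ofReal δ :=
    le_trans h1 (le_trans hN0.le (add_le_add_left (measure_mono hsub) _))
  have h3 : (μ S + ENNReal.ofReal δ).toReal = (μ S).toReal + δ := by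
    rw [ENNReal.toReal_add (measure_ne_top μ _) ENNReal.ofReal_ne_top,
      ENNReal.toReal_ofReal hδ.le]
  calc (μ (C k)).toReal ≤ (μ S + ENNReal.ofReal δ).toReal :=
        ENNReal.toReal_mono (by finiteness) h2
    _ = (μ S).toReal + δ := h3


lemma finite_decomp' {a : EReal} (hab : a ≠ ⊥) {m : ℕ} {c : Fin m → Prop} [DecidablePred c]
    (h : a + (∑ i, (if c i then (0:EReal) else ⊤)) ≠ ⊤) :
    a ≠ ⊤ ∧ (∀ i, c i) ∧ a + (∑ i, (if c i then (0:EReal) else ⊤)) = a := by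
  rcases ind_sum_cases c with hc | hc
  · rw [ind_sum_zero hc, add_zero] at h ⊢
    exact ⟨h, hc, rfl⟩
  · exfalso
    rw [hc, EReal.add_top_of_ne_bot hab] at h
    exact h rfl

lemma en2_nonneg {m : ℕ} (u : Fin m → ℝ) : 0 ≤ en2 u := Real.sqrt_nonneg _

lemma abs_le_en2 {m : ℕ} (u : Fin m → ℝ) (i : Fin m) : |u i| ≤ en2 u := by
  rw [← Real.sqrt_sq_eq_abs]
  exact Real.sqrt_le_sqrt (Finset.single_le_sum (fun j _ => sq_nonneg (u j)) (Finset.mem_univ i))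

lemma continuous_en2 {m : ℕ} : Continuous (en2 (m := m)) :=
  Real.continuous_sqrt.comp (continuous_finset_sum _ fun i _ => (continuous_apply i).pow 2)

lemma en2_const_neg {m : ℕ} {c : ℝ} (hc : 0 ≤ c) :
    en2 (fun _ : Fin m => -c) = Real.sqrt m * c := by
  unfold en2
  simp only [neg_sq]
  rw [Finset.sum_const, Finset.card_univ, Fintype.card_fin, nsmul_eq_mul,
    Real.sqrt_mul (Nat.cast_nonneg m), Real.sqrt_sq hc]

lemma dmiH_nonneg {d n m : ℕ} (g0 : EuclideanSpace ℝ (Fin n) → EReal)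
    (H : Fin m → EuclideanSpace ℝ (Fin n) → Set (EuclideanSpace ℝ (Fin d)))
    (μ1 μ2 : Measure (EuclideanSpace ℝ (Fin d))) : 0 ≤ dmiH g0 H μ1 μ2 :=
  Real.sSup_nonneg (fun r hr => by obtain ⟨x, _, i, rfl⟩ := hr; exact abs_nonneg _)

lemma le_dmiH {d n m : ℕ} (g0 : EuclideanSpace ℝ (Fin n) → EReal)
    (H : Fin m → EuclideanSpace ℝ (Fin n) → Set (EuclideanSpace ℝ (Fin d)))
    (μ1 μ2 : Measure (EuclideanSpace ℝ (Fin d))) [IsFiniteMeasure μ1] [IsFiniteMeasure μ2]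
    {x : EuclideanSpace ℝ (Fin n)} (hx : g0 x ≠ ⊤) (i : Fin m) :
    |(μ1 (H i x)).toReal - (μ2 (H i x)).toReal| ≤ dmiH g0 H μ1 μ2 := by
  refine le_csSup ?_ ⟨x, hx, i, rfl⟩
  refine ⟨(μ1 Set.univ).toReal + (μ2 Set.univ).toReal, fun r hr => ?_⟩
  obtain ⟨y, _, j, rfl⟩ := hr
  refine le_trans (abs_sub _ _) (add_le_add ?_ ?_) <;>
    · rw [abs_of_nonneg ENNReal.toReal_nonneg]
      exact ENNReal.toReal_mono (measure_ne_top _ _) (measure_mono (Set.subset_univ _))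


/-- Corollary 4.3: stability of chance-constrained programs under minimal-information
convergence of the perturbed distributions. -/
theorem cc_minimal_information_convergence

    {d n m : ℕ}
    (Ξ : Set (EuclideanSpace ℝ (Fin d))) (hΞne : Ξ.Nonempty) (hΞcl : IsClosed Ξ)
    (μ : Measure (EuclideanSpace ℝ (Fin d))) [IsProbabilityMeasure μ] (hμΞ : μ Ξᶜ = 0)
    (μs : ℕ → Measure (EuclideanSpace ℝ (Fin d))) [∀ ν, IsProbabilityMeasure (μs ν)]
    (hμsΞ : ∀ ν, μs ν Ξᶜ = 0)
    (g0 : EuclideanSpace ℝ (Fin n) → EReal)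
    (hg0lsc : LowerSemicontinuous g0)
    (hg0bot : ∀ x, g0 x ≠ ⊥) (hg0top : ∃ x, g0 x ≠ ⊤)
    (b : Fin m → ℝ) (hb : ∀ i, 0 ≤ b i ∧ b i ≤ 1)
    (H : Fin m → EuclideanSpace ℝ (Fin n) → Set (EuclideanSpace ℝ (Fin d)))
    (hHsub : ∀ i x, H i x ⊆ Ξ)
    (hHmeas : ∀ i x, MeasurableSet (H i x))
    (hHosc : ∀ (i : Fin m) (x : EuclideanSpace ℝ (Fin n))
        (xs : ℕ → EuclideanSpace ℝ (Fin n)), Tendsto xs atTop (𝓝 x) →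
        LimOut (fun ν => H i (xs ν)) ⊆ H i x)
    (α : ℝ) (hα : 1 ≤ α)
    (lam : ℕ → ℝ) (hlam : ∀ ν, 0 < lam ν) (hlam0 : Tendsto lam atTop (𝓝 0))

    (hargmin : ∃ x, phiCC g0 b H μ x ≠ ⊤ ∧ phiCC g0 b H μ x = ⨅ y, phiCC g0 b H μ y)
    (hd : Tendsto (fun ν => dmiH g0 H (μs ν) μ) atTop (𝓝 0))
    (hrate : Tendsto (fun ν => (1 / lam ν) * dmiH g0 H (μs ν) μ ^ α) atTop (𝓝 0))
    (εs : ℕ → ℝ) (hεs : ∀ ν, 0 ≤ εs ν) (hεs0 : Tendsto εs atTop (𝓝 0))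
    (us : ℕ → Fin m → ℝ) (xs : ℕ → EuclideanSpace ℝ (Fin n))
    (hmin : ∀ ν, (us ν, xs ν) ∈ eArgmin (rockCC g0 b H (μs ν) α (lam ν)) (εs ν))
    (hbdd : ∃ R : ℝ, ∀ ν, en2 (us ν) ≤ R ∧ ‖xs ν‖ ≤ R) :
    Tendsto (fun ν => rockCC g0 b H (μs ν) α (lam ν) (us ν, xs ν)) atTop
      (𝓝 (⨅ x, phiCC g0 b H μ x)) ∧
    LimOut (fun ν => eArgmin (rockCC g0 b H (μs ν) α (lam ν)) (εs ν)) ⊆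
      {q : (Fin m → ℝ) × EuclideanSpace ℝ (Fin n) |
        q.1 = 0 ∧ q.2 ∈ eArgmin (phiCC g0 b H μ) 0} ∧
    (∀ x : EuclideanSpace ℝ (Fin n),
      (∃ N : ℕ → ℕ, StrictMono N ∧ Tendsto (fun k => xs (N k)) atTop (𝓝 x)) →
      x ∈ eArgmin (phiCC g0 b H μ) 0) := by
  classical
  set φ := phiCC g0 b H μ with hφdef
  obtain ⟨xstar, hxstop, hxsmin⟩ := hargmin
  have hxsdec := finite_decomp' (hg0bot xstar)
    (c := fun i => b i - (μ (H i xstar)).toReal ≤ 0) hxstop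
  have hgs_top : g0 xstar ≠ ⊤ := hxsdec.1
  have hfeas_star : ∀ i, b i - (μ (H i xstar)).toReal ≤ 0 := hxsdec.2.1
  set r : ℝ := (g0 xstar).toReal with hr_def
  have hgs_coe : g0 xstar = (r : EReal) := (EReal.coe_toReal hgs_top (hg0bot xstar)).symm
  have hsumstar : ∑ i, (if b i - (μ (H i xstar)).toReal ≤ 0 then (0:EReal) else ⊤) = 0 :=
    Finset.sum_eq_zero fun i _ => if_pos (hfeas_star i)
  have hφstar : φ xstar = (r : EReal) := by
    show g0 xstar + _ = _
    rw [hsumstar, add_zero, hgs_coe]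
  have hinfφ : (⨅ y, φ y) = (r : EReal) := by rw [← hxsmin, hφstar]
  set dν : ℕ → ℝ := fun ν => dmiH g0 H (μs ν) μ with hdνdef
  have hdν0 : ∀ ν, 0 ≤ dν ν := fun ν => dmiH_nonneg _ _ _ _
  set cν : ℕ → ℝ := fun ν => (1 / (α * lam ν)) * (Real.sqrt m * dν ν) ^ α with hcνdef
  have hα0 : (0:ℝ) < α := lt_of_lt_of_le one_pos hα
  have hcν0 : ∀ ν, 0 ≤ cν ν := fun ν =>
    mul_nonneg (le_of_lt (one_div_pos.2 (mul_pos hα0 (hlam ν))))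
      (Real.rpow_nonneg (mul_nonneg (Real.sqrt_nonneg _) (hdν0 ν)) α)
  have hcν_lim : Tendsto cν atTop (𝓝 0) := by
    have heq : ∀ ν, cν ν = (Real.sqrt m ^ α / α) * ((1 / lam ν) * dν ν ^ α) := by
      intro ν
      have hl := (hlam ν).ne'
      rw [hcνdef]
      simp only
      rw [Real.mul_rpow (Real.sqrt_nonneg _) (hdν0 ν)]
      field_simp
    rw [funext heq]
    have := hrate.const_mul (Real.sqrt m ^ α / α)
    simpa using this
  have hcand : ∀ ν, rockCC g0 b H (μs ν) α (lam ν) (fun _ => -(dν ν), xstar)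
      = ((r + cν ν : ℝ) : EReal) := by
    intro ν
    have hcond : ∀ i : Fin m, -(dν ν) + b i - (μs ν (H i xstar)).toReal ≤ 0 := by
      intro i
      have h1 := le_dmiH g0 H (μs ν) μ hgs_top i
      have h2 := hfeas_star i
      have h3 : (μ (H i xstar)).toReal - (μs ν (H i xstar)).toReal ≤ dν ν := by
        rw [abs_sub_comm] at h1
        exact (abs_le.1 h1).2
      linarith
    have hsum : ∑ i, (if (fun _ : Fin m => -(dν ν)) i + b i
        - (μs ν (H i xstar)).toReal ≤ 0 then (0:EReal) else ⊤) = 0 :=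
      Finset.sum_eq_zero fun i _ => if_pos (hcond i)
    show g0 xstar + _ + _ = _
    rw [hsum, add_zero, hgs_coe, en2_const_neg (hdν0 ν), ← EReal.coe_add]
  have hub : ∀ ν, (⨅ w, rockCC g0 b H (μs ν) α (lam ν) w) ≤ ((r + cν ν : ℝ) : EReal) :=
    fun ν => (hcand ν) ▸ iInf_le _ _
  set Rb : ℕ → ℝ := fun ν => r + cν ν + εs ν with hRbdef
  have hRb_lim : Tendsto Rb atTop (𝓝 r) := by
    have : Tendsto (fun ν => r + cν ν + εs ν) atTop (𝓝 (r + 0 + 0)) :=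
      (tendsto_const_nhds.add hcν_lim).add hεs0
    simpa using this
  have hub2 : ∀ ν (p : (Fin m → ℝ) × EuclideanSpace ℝ (Fin n)),
      p ∈ eArgmin (rockCC g0 b H (μs ν) α (lam ν)) (εs ν) →
      rockCC g0 b H (μs ν) α (lam ν) p ≤ ((Rb ν : ℝ) : EReal) := by
    intro ν p hp
    refine le_trans hp.2 ?_
    calc (⨅ w, rockCC g0 b H (μs ν) α (lam ν) w) + ((εs ν : ℝ) : EReal)
        ≤ ((r + cν ν : ℝ) : EReal) + ((εs ν : ℝ) : EReal) := add_le_add_left (hub ν) _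
      _ = ((Rb ν : ℝ) : EReal) := by rw [← EReal.coe_add]
  -- THE CORE ARGUMENT
  have core : ∀ (N : ℕ → ℕ), StrictMono N →
      ∀ (p : ℕ → (Fin m → ℝ) × EuclideanSpace ℝ (Fin n)),
      (∀ k, p k ∈ eArgmin (rockCC g0 b H (μs (N k)) α (lam (N k))) (εs (N k))) →
      ∀ q : (Fin m → ℝ) × EuclideanSpace ℝ (Fin n), Tendsto p atTop (𝓝 q) →
      q.1 = 0 ∧ q.2 ∈ eArgmin φ 0 ∧
        Tendsto (fun k => rockCC g0 b H (μs (N k)) α (lam (N k)) (p k)) atTop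
          (𝓝 ((r : EReal))) := by
    intro N hN p hp q hq
    have hdec : ∀ k, g0 (p k).2 ≠ ⊤ ∧
        (∀ i, (p k).1 i + b i - (μs (N k) (H i (p k).2)).toReal ≤ 0) ∧
        rockCC g0 b H (μs (N k)) α (lam (N k)) (p k)
          = (((g0 (p k).2).toReal + (1 / (α * lam (N k))) * en2 (p k).1 ^ α : ℝ) : EReal) :=
      fun k => finite_decomp (hg0bot _) (hp k).1
    set gk : ℕ → ℝ := fun k => (g0 (p k).2).toReal with hgkdef
    set ck : ℕ → ℝ := fun k => (1 / (α * lam (N k))) * en2 (p k).1 ^ α with hckdef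
    have hck0 : ∀ k, 0 ≤ ck k := fun k =>
      mul_nonneg (le_of_lt (one_div_pos.2 (mul_pos hα0 (hlam (N k)))))
        (Real.rpow_nonneg (en2_nonneg _) α)
    set tk : ℕ → ℝ := fun k => gk k + ck k with htkdef
    have hFk : ∀ k, rockCC g0 b H (μs (N k)) α (lam (N k)) (p k) = ((tk k : ℝ) : EReal) :=
      fun k => (hdec k).2.2
    have htk_le : ∀ k, tk k ≤ Rb (N k) := by
      intro k
      have h := hub2 (N k) (p k) (hp k)
      rw [hFk k] at h
      exact EReal.coe_le_coe_iff.1 h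
    have htk_eq : ∀ k, tk k = gk k + ck k := fun k => rfl
    have hRbk : Tendsto (fun k => Rb (N k)) atTop (𝓝 r) := hRb_lim.comp hN.tendsto_atTop
    have hxk : Tendsto (fun k => (p k).2) atTop (𝓝 q.2) :=
      (continuous_snd.continuousAt.tendsto).comp hq
    have huk : Tendsto (fun k => (p k).1) atTop (𝓝 q.1) :=
      (continuous_fst.continuousAt.tendsto).comp hq
    have hgk_coe : ∀ k, g0 (p k).2 = ((gk k : ℝ) : EReal) :=
      fun k => (EReal.coe_toReal (hdec k).1 (hg0bot _)).symm
    obtain ⟨β, hβ⟩ := exists_coe_lt (hg0bot q.2)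
    have hβev : ∀ᶠ k in atTop, β < gk k := by
      filter_upwards [hxk.eventually (hg0lsc q.2 β hβ)] with k hk
      rw [hgk_coe k] at hk
      exact EReal.coe_lt_coe_iff.1 hk
    have hu0 : q.1 = 0 := by
      by_contra hne
      have hex : ∃ i, q.1 i ≠ 0 := by
        by_contra hall; push_neg at hall; exact hne (funext hall)
      obtain ⟨i, hi⟩ := hex
      have ht_pos : 0 < en2 q.1 :=
        lt_of_lt_of_le (abs_pos.2 hi) (abs_le_en2 q.1 i)
      have hen2 : Tendsto (fun k => en2 (p k).1) atTop (𝓝 (en2 q.1)) :=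
        (continuous_en2.continuousAt.tendsto).comp huk
      have hpow : Tendsto (fun k => en2 (p k).1 ^ α) atTop (𝓝 (en2 q.1 ^ α)) :=
        ((Real.continuousAt_rpow_const _ α (Or.inl ht_pos.ne')).tendsto).comp hen2
      have hlamk : Tendsto (fun k => α * lam (N k)) atTop (𝓝[>] 0) := by
        refine tendsto_nhdsWithin_of_tendsto_nhds_of_eventually_within _ ?_ ?_
        · have := (hlam0.comp hN.tendsto_atTop).const_mul α
          simpa using this
        · exact Eventually.of_forall fun k => mul_pos hα0 (hlam (N k))
      have hinv : Tendsto (fun k => (α * lam (N k))⁻¹) atTop atTop :=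
        hlamk.inv_tendsto_nhdsGT_zero
      have hck_top : Tendsto ck atTop atTop := by
        have h := hinv.atTop_mul_pos (Real.rpow_pos_of_pos ht_pos α) hpow
        refine h.congr fun k => ?_
        rw [hckdef]
        simp [one_div]
      obtain ⟨k, hk1, hk2, hk3⟩ := (hβev.and ((hck_top.eventually_ge_atTop (r + 1 - β)).and
        (hRbk.eventually_lt_const (show r < r + 1 by linarith)))).exists
      have h := htk_le k
      rw [htk_eq k] at h
      linarith
    have hfeas : ∀ i : Fin m, b i - (μ (H i q.2)).toReal ≤ 0 := by
      intro i
      have hsub : ∀ z, (∃ Nf : ℕ → ℕ, StrictMono Nf ∧ ∃ zs : ℕ → EuclideanSpace ℝ (Fin d),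
          (∀ k, zs k ∈ (fun k => H i ((p k).2)) (Nf k)) ∧ Tendsto zs atTop (𝓝 z)) →
          z ∈ H i q.2 :=
        fun z hz => hHosc i q.2 (fun k => (p k).2) hxk hz
      rw [sub_nonpos]
      refine le_of_forall_pos_le_add fun ε hε => ?_
      have hδ : (0:ℝ) < ε/3 := by linarith
      have hm1 := measure_tail_bound μ (C := fun k => H i ((p k).2)) (S := H i q.2) hsub hδ
      have hm2 : ∀ᶠ k in atTop, dν (N k) ≤ ε/3 :=
        (hd.comp hN.tendsto_atTop).eventually (eventually_le_nhds hδ)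
      have hm3 : ∀ᶠ k in atTop, |(p k).1 i| ≤ ε/3 := by
        have h1 : Tendsto (fun k => (p k).1 i) atTop (𝓝 (q.1 i)) :=
          ((continuous_apply i).continuousAt.tendsto).comp huk
        rw [hu0] at h1
        simp only [Pi.zero_apply] at h1
        have h4 : Tendsto (fun k => |(p k).1 i|) atTop (𝓝 |(0:ℝ)|) := h1.abs
        rw [abs_zero] at h4
        exact h4.eventually (eventually_le_nhds hδ)
      obtain ⟨k, hk1, hk2, hk3⟩ := (hm1.and (hm2.and hm3)).exists
      have hcon := (hdec k).2.1 i
      have hdmi := le_dmiH g0 H (μs (N k)) μ (hdec k).1 i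
      have h5 : (μs (N k) (H i (p k).2)).toReal - (μ (H i (p k).2)).toReal ≤ dν (N k) :=
        (abs_le.1 hdmi).2
      have h8 : -((p k).1 i) ≤ ε/3 := le_trans (neg_le_abs _) hk3
      linarith
    have hsumq : ∑ i, (if b i - (μ (H i q.2)).toReal ≤ 0 then (0:EReal) else ⊤) = 0 :=
      Finset.sum_eq_zero fun i _ => if_pos (hfeas i)
    have hφq : φ q.2 = g0 q.2 := by
      show g0 q.2 + _ = _
      rw [hsumq, add_zero]
    have hgq_le : g0 q.2 ≤ (r : EReal) := by
      by_contra hlt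
      push_neg at hlt
      obtain ⟨β', hβ'1, hβ'2⟩ := EReal.exists_between_coe_real hlt
      have hβ'ev : ∀ᶠ k in atTop, β' < gk k := by
        filter_upwards [hxk.eventually (hg0lsc q.2 β' hβ'2)] with k hk
        rw [hgk_coe k] at hk
        exact EReal.coe_lt_coe_iff.1 hk
      have hβ'r : r < β' := EReal.coe_lt_coe_iff.1 hβ'1
      obtain ⟨k, hk1, hk2⟩ := (hβ'ev.and (hRbk.eventually_lt_const hβ'r)).exists
      have h3 := htk_le k
      have h4 := hck0 k
      rw [htk_eq k] at h3
      linarith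
    have hgq : g0 q.2 = (r : EReal) := by
      refine le_antisymm hgq_le ?_
      rw [← hinfφ, ← hφq]
      exact iInf_le _ _
    have hmem : q.2 ∈ eArgmin φ 0 := by
      constructor
      · rw [hφq, hgq]; exact EReal.coe_ne_top r
      · rw [hφq, hgq, hinfφ]
        simp
    have htend : Tendsto tk atTop (𝓝 r) := by
      rw [tendsto_order]
      constructor
      · intro β' hβ'
        have hβ'c : (β' : EReal) < g0 q.2 := by
          rw [hgq]; exact_mod_cast hβ'
        filter_upwards [hxk.eventually (hg0lsc q.2 β' hβ'c)] with k hk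
        rw [hgk_coe k] at hk
        have h3 := EReal.coe_lt_coe_iff.1 hk
        have h4 := hck0 k
        rw [htk_eq k]
        linarith
      · intro β' hβ'
        filter_upwards [hRbk.eventually_lt_const hβ'] with k hk
        exact lt_of_le_of_lt (htk_le k) hk
    exact ⟨hu0, hmem, Tendsto.congr (fun k => (hFk k).symm) (EReal.tendsto_coe.2 htend)⟩
  -- compact box containing the sequence
  obtain ⟨R, hR⟩ := hbdd
  have hR0 : 0 ≤ R := le_trans (norm_nonneg _) (hR 0).2
  set K : Set ((Fin m → ℝ) × EuclideanSpace ℝ (Fin n)) :=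
    closedBall (0 : Fin m → ℝ) R ×ˢ closedBall (0 : EuclideanSpace ℝ (Fin n)) R with hKdef
  have hKcomp : IsCompact K := (isCompact_closedBall _ _).prod (isCompact_closedBall _ _)
  have hmemK : ∀ ν, (us ν, xs ν) ∈ K := by
    intro ν
    constructor
    · rw [mem_closedBall_zero_iff]
      refine (pi_norm_le_iff_of_nonneg hR0).2 fun i => ?_
      rw [Real.norm_eq_abs]
      exact le_trans (abs_le_en2 _ i) (hR ν).1
    · rw [mem_closedBall_zero_iff]
      exact (hR ν).2
  have parta : Tendsto (fun ν => rockCC g0 b H (μs ν) α (lam ν) (us ν, xs ν)) atTop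
      (𝓝 ((r : EReal))) := by
    by_contra hnot
    obtain ⟨U, hU, hfreq⟩ := not_tendsto_iff_exists_frequently_notMem.1 hnot
    obtain ⟨ns, hns, hnsU⟩ := Filter.extraction_of_frequently_atTop hfreq
    obtain ⟨q, _, ms, hms, hqlim⟩ :=
      hKcomp.tendsto_subseq (x := fun k => (us (ns k), xs (ns k))) (fun k => hmemK (ns k))
    have hcore := core (ns ∘ ms) (hns.comp hms)
      (fun k => (us (ns (ms k)), xs (ns (ms k)))) (fun k => hmin (ns (ms k))) q hqlim
    obtain ⟨k, hk⟩ := (hcore.2.2.eventually (eventually_mem_nhds_iff.2 hU)).exists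
    exact hnsU (ms k) (mem_of_mem_nhds hk)
  refine ⟨by rw [hinfφ]; exact parta, ?_, ?_⟩
  · rintro q ⟨N, hN, zs, hzs, hlim⟩
    obtain ⟨h1, h2, _⟩ := core N hN zs hzs q hlim
    exact ⟨h1, h2⟩
  · rintro x ⟨N, hN, hx⟩
    have humem : ∀ k, us (N k) ∈ closedBall (0 : Fin m → ℝ) R := fun k => (hmemK (N k)).1
    obtain ⟨uinf, _, ms, hms, hulim⟩ :=
      (isCompact_closedBall (0 : Fin m → ℝ) R).tendsto_subseq humem
    have hplim : Tendsto (fun k => (us (N (ms k)), xs (N (ms k)))) atTop (𝓝 (uinf, x)) :=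
      Tendsto.prodMk_nhds hulim (hx.comp hms.tendsto_atTop)
    obtain ⟨_, h2, _⟩ := core (N ∘ ms) (hN.comp hms)
      (fun k => (us (N (ms k)), xs (N (ms k)))) (fun k => hmin (N (ms k))) (uinf, x) hplim
    exact h2

end
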